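/- Let R > 0 and assume d₁ > 0, a ≤ r√((cosh R)² − 1), and (a² + r² − 2(cosh R)² r²)² ≥ d₁² d₂². Define u_± = ( 2(cosh R)² r² − r² − a² ± √( (a² + r² − 2(cosh R)² r²)² − d₁² d₂² ) ) / d₁². Then u₋ ≤ ((cosh R)² + 2 cosh R)/(cosh R)² and u₊ ≥ (cosh R)² r² / d₁². -/
import Mathlib


open Real

noncomputable section

/-- `d₁ = √(a² + r² − 2ar cos β)`. -/
def d1 (a r β : ℝ) : ℝ := Real.sqrt (a ^ 2 + r ^ 2 - 2 * a * r * Real.cos β)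

/-- `d₂ = √(a² + r² + 2ar cos β)`. -/
def d2 (a r β : ℝ) : ℝ := Real.sqrt (a ^ 2 + r ^ 2 + 2 * a * r * Real.cos β)

set_option maxHeartbeats 1000000 in
/-- Bounds on the roots `u₋, u₊` of the quadratic describing the intersection of `γ₂`
with the tube `T_R(γ̃)` (formulas (4.9) and (4.10) of the paper). -/
theorem u_plus_minus_bounds (a r β R : ℝ) (ha : 0 ≤ a) (hr : 0 < r)
    (hβ : β ∈ Set.Ioc 0 (π / 2)) (hR : 0 < R) (hd1 : 0 < d1 a r β)
    (haR : a ≤ r * Real.sqrt (Real.cosh R ^ 2 - 1))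
    (hdisc : d1 a r β ^ 2 * d2 a r β ^ 2 ≤
      (a ^ 2 + r ^ 2 - 2 * Real.cosh R ^ 2 * r ^ 2) ^ 2) :
    (2 * Real.cosh R ^ 2 * r ^ 2 - r ^ 2 - a ^ 2 -
          Real.sqrt ((a ^ 2 + r ^ 2 - 2 * Real.cosh R ^ 2 * r ^ 2) ^ 2 -
            d1 a r β ^ 2 * d2 a r β ^ 2)) / d1 a r β ^ 2 ≤
        (Real.cosh R ^ 2 + 2 * Real.cosh R) / Real.cosh R ^ 2 ∧
    Real.cosh R ^ 2 * r ^ 2 / d1 a r β ^ 2 ≤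
      (2 * Real.cosh R ^ 2 * r ^ 2 - r ^ 2 - a ^ 2 +
          Real.sqrt ((a ^ 2 + r ^ 2 - 2 * Real.cosh R ^ 2 * r ^ 2) ^ 2 -
            d1 a r β ^ 2 * d2 a r β ^ 2)) / d1 a r β ^ 2 := by
  set c := Real.cosh R with hc
  have hc1 : 1 ≤ c := Real.one_le_cosh R
  have hc0 : 0 < c := lt_of_lt_of_le one_pos hc1
  have hcosβ_nonneg : 0 ≤ Real.cos β := by
    apply Real.cos_nonneg_of_mem_Icc
    constructor
    · linarith [hβ.1, Real.pi_pos]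
    · exact hβ.2
  have hcosβ_le : Real.cos β ≤ 1 := Real.cos_le_one β
  have hd1arg : 0 ≤ a ^ 2 + r ^ 2 - 2 * a * r * Real.cos β := by
    nlinarith [sq_nonneg (a - r), mul_nonneg ha hr.le]
  have hd2arg : 0 ≤ a ^ 2 + r ^ 2 + 2 * a * r * Real.cos β := by
    nlinarith [mul_nonneg ha hr.le]
  have hd1sq : d1 a r β ^ 2 = a ^ 2 + r ^ 2 - 2 * a * r * Real.cos β :=
    Real.sq_sqrt hd1arg
  have hd2sq : d2 a r β ^ 2 = a ^ 2 + r ^ 2 + 2 * a * r * Real.cos β :=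
    Real.sq_sqrt hd2arg
  have hd1sq_pos : 0 < d1 a r β ^ 2 := pow_pos hd1 2
  have hc2 : 0 ≤ c ^ 2 - 1 := by nlinarith
  have hsq : Real.sqrt (c ^ 2 - 1) ^ 2 = c ^ 2 - 1 := Real.sq_sqrt hc2
  have ha2 : a ^ 2 ≤ r ^ 2 * (c ^ 2 - 1) := by
    nlinarith [Real.sqrt_nonneg (c ^ 2 - 1), haR, ha]
  have harc : a * r ≤ r ^ 2 * c := by
    have h1 : Real.sqrt (c ^ 2 - 1) ≤ c := by
      have h2 := Real.sqrt_le_sqrt (show c ^ 2 - 1 ≤ c ^ 2 by linarith)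
      rwa [Real.sqrt_sq hc0.le] at h2
    nlinarith [haR, hr]
  set D := (a ^ 2 + r ^ 2 - 2 * c ^ 2 * r ^ 2) ^ 2 - d1 a r β ^ 2 * d2 a r β ^ 2 with hD
  have hD0 : 0 ≤ D := by simp only [hD]; linarith
  have hsD : Real.sqrt D ^ 2 = D := Real.sq_sqrt hD0
  have hsD0 : 0 ≤ Real.sqrt D := Real.sqrt_nonneg D
  -- c²r² ≤ −S  where  S = a²+r²−2c²r²
  have hcS : c ^ 2 * r ^ 2 ≤ 2 * c ^ 2 * r ^ 2 - r ^ 2 - a ^ 2 := by nlinarith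
  -- √D ≤ −S
  have hsDle : Real.sqrt D ≤ 2 * c ^ 2 * r ^ 2 - r ^ 2 - a ^ 2 := by
    have : Real.sqrt D ≤ Real.sqrt ((2 * c ^ 2 * r ^ 2 - r ^ 2 - a ^ 2) ^ 2) := by
      apply Real.sqrt_le_sqrt
      simp only [hD]
      nlinarith
    rwa [Real.sqrt_sq (by nlinarith)] at this
  -- d2² ≤ r²(c²+2c)
  have hd2b : d2 a r β ^ 2 ≤ r ^ 2 * (c ^ 2 + 2 * c) := by
    rw [hd2sq]; nlinarith [mul_nonneg ha hr.le]
  constructor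
  · -- u₋ bound
    rw [div_le_div_iff₀ hd1sq_pos (by positivity)]
    -- (−S − √D)(−S + √D) = d1² d2²
    have hprod : (2 * c ^ 2 * r ^ 2 - r ^ 2 - a ^ 2 - Real.sqrt D) *
        (2 * c ^ 2 * r ^ 2 - r ^ 2 - a ^ 2 + Real.sqrt D) =
        d1 a r β ^ 2 * d2 a r β ^ 2 := by
      have : (2 * c ^ 2 * r ^ 2 - r ^ 2 - a ^ 2) ^ 2 - Real.sqrt D ^ 2 =
          d1 a r β ^ 2 * d2 a r β ^ 2 := by rw [hsD]; simp only [hD]; ring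
      nlinarith [this]
    have hN : 0 ≤ 2 * c ^ 2 * r ^ 2 - r ^ 2 - a ^ 2 - Real.sqrt D := by linarith
    have hge : c ^ 2 * r ^ 2 ≤ 2 * c ^ 2 * r ^ 2 - r ^ 2 - a ^ 2 + Real.sqrt D := by
      linarith
    nlinarith [mul_le_mul_of_nonneg_left hge hN, hprod,
      mul_le_mul_of_nonneg_left hd2b hd1sq_pos.le, sq_nonneg r, hr, hc0,
      mul_pos (mul_pos hc0 hc0) (mul_pos hr hr)]
  · -- u₊ bound
    gcongr
    linarith

end
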